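/- arXiv:2302.05233 — 2 statements merged into one kernel-verified Lean document; each statement's English description precedes it below -/
import Mathlib

section
/- Let M be a Lie monoid and X a left-invariant vector field on M (i.e., d(L_g)_h(X_h) = X_{gh} for all g, h). If γ is the maximal integral curve of X starting at the identity e, defined on the interval J_e, then for every g ∈ M the curve t ↦ g·γ(t) is an integral curve of X starting at g; consequently J_e ⊆ J_g, and the flow satisfies φ_t(g) = g·γ(t) for t ∈ J_e. -/
open Set

/-- The Dec-2024 Mathlib meaning of `IsIntegralCurveOn` on a manifold: `γ` has (full,
not within-`s`) manifold derivative `v (γ t)` at every `t ∈ s`. -/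
def IsIntegralCurveOnOld {E H : Type*} [NormedAddCommGroup E] [NormedSpace ℝ E]
    [TopologicalSpace H] {I : ModelWithCorners ℝ E H}
    {M : Type*} [TopologicalSpace M] [ChartedSpace H M]
    (γ : ℝ → M) (v : (x : M) → TangentSpace I x) (s : Set ℝ) : Prop :=
  ∀ t ∈ s, HasMFDerivAt (modelWithCornersSelf ℝ ℝ) I γ t ((1 : ℝ →L[ℝ] ℝ).smulRight <| v (γ t))

/-! By the chain rule, left translation by `g` carries integral curves of a left-invariant field
to integral curves; applied to the curve through `1` this gives the curve `t ↦ g * γ t` through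
`g`, which maximality of the curve through `g` forces to be a restriction of it. -/

namespace IsIntegralCurveOnOld

variable {E H : Type*} [NormedAddCommGroup E] [NormedSpace ℝ E] [TopologicalSpace H]
  {I : ModelWithCorners ℝ E H} {M : Type*} [TopologicalSpace M] [ChartedSpace H M]

theorem comp_of_mfderiv_eq {E' H' : Type*} [NormedAddCommGroup E'] [NormedSpace ℝ E']
    [TopologicalSpace H'] {I' : ModelWithCorners ℝ E' H'}
    {N : Type*} [TopologicalSpace N] [ChartedSpace H' N]
    {X : (x : M) → TangentSpace I x} {Y : (y : N) → TangentSpace I' y}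
    {γ : ℝ → M} {s : Set ℝ} (hγ : IsIntegralCurveOnOld γ X s) {f : M → N}
    (hf : ∀ t ∈ s, MDifferentiableAt I I' f (γ t))
    (hfXY : ∀ x, mfderiv I I' f x (X x) = Y (f x)) :
    IsIntegralCurveOnOld (f ∘ γ) Y s := by
  intro t ht
  have hderiv : (mfderiv I I' f (γ t)).comp ((1 : ℝ →L[ℝ] ℝ).smulRight (X (γ t))) =
      (1 : ℝ →L[ℝ] ℝ).smulRight (Y (f (γ t))) := by
    ext
    simp [hfXY]
  exact ((hf t ht).hasMFDerivAt.comp t (hγ t ht)).congr_mfderiv hderiv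

theorem mul_left [Monoid M] [ContMDiffMul I 1 M] {X : (g : M) → TangentSpace I g}
    (hX : ∀ g h : M, mfderiv I I (fun k => g * k) h (X h) = X (g * h))
    {γ : ℝ → M} {s : Set ℝ} (hγ : IsIntegralCurveOnOld γ X s) (g : M) :
    IsIntegralCurveOnOld (fun t => g * γ t) X s :=
  hγ.comp_of_mfderiv_eq (fun _ _ => mdifferentiableAt_mul_left) (hX g)

end IsIntegralCurveOnOld

theorem stmt_12_general {E H : Type*} [NormedAddCommGroup E] [NormedSpace ℝ E]
    [TopologicalSpace H] (I : ModelWithCorners ℝ E H)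
    (M : Type*) [TopologicalSpace M] [ChartedSpace H M] [Monoid M]
    [ContMDiffMul I (⊤ : ℕ∞) M]
    (X : (g : M) → TangentSpace I g)
    (hX : ∀ g h : M, mfderiv I I (fun k => g * k) h (X h) = X (g * h))
    (γ : ℝ → M) (J : Set ℝ) (hγ : IsIntegralCurveOnOld γ X J) (hγ0 : γ 0 = 1) :
    ∀ g : M,
      (IsIntegralCurveOnOld (fun t => g * γ t) X J ∧ g * γ 0 = g) ∧
      ∀ (γg : ℝ → M) (Jg : Set ℝ), IsIntegralCurveOnOld γg X Jg → γg 0 = g →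
        -- maximality of `(γg, Jg)`: every integral curve through `g` is a
        -- restriction of `γg`
        (∀ (σ : ℝ → M) (J' : Set ℝ), IsIntegralCurveOnOld σ X J' → σ 0 = g →
          J' ⊆ Jg ∧ Set.EqOn σ γg J') →
        J ⊆ Jg ∧ ∀ t ∈ J, γg t = g * γ t := by
  intro g
  have hcurve := hγ.mul_left hX g
  have hstart : g * γ 0 = g := by rw [hγ0, mul_one]
  refine ⟨⟨hcurve, hstart⟩, fun γg Jg _ _ hmax => ?_⟩
  obtain ⟨hsub, heq⟩ := hmax _ J hcurve hstart
  exact ⟨hsub, fun t ht => (heq ht).symm⟩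

/-- Let `M` be a Lie monoid and `X` a left-invariant vector field on `M`.  If
`γ` is an integral curve of `X` on `J` starting at the identity, then for every
`g ∈ M` the curve `t ↦ g * γ t` is an integral curve of `X` on `J` starting at
`g`; consequently `J ⊆ J_g` for the domain `J_g` of the maximal integral curve
`γ_g` through `g`, and the flow satisfies `γ_g t = g * γ t` on `J`. -/
theorem stmt_12 {E H : Type*} [NormedAddCommGroup E] [NormedSpace ℝ E]
    [TopologicalSpace H] (I : ModelWithCorners ℝ E H)
    (M : Type*) [TopologicalSpace M] [ChartedSpace H M] [Monoid M]
    [IsManifold I (⊤ : ℕ∞) M] [ContMDiffMul I (⊤ : ℕ∞) M]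
    (X : (g : M) → TangentSpace I g)
    (hX : ∀ g h : M, mfderiv I I (fun k => g * k) h (X h) = X (g * h))
    (γ : ℝ → M) (J : Set ℝ) (hγ : IsIntegralCurveOnOld γ X J) (hγ0 : γ 0 = 1) :
    ∀ g : M,
      (IsIntegralCurveOnOld (fun t => g * γ t) X J ∧ g * γ 0 = g) ∧
      ∀ (γg : ℝ → M) (Jg : Set ℝ), IsIntegralCurveOnOld γg X Jg → γg 0 = g →
        -- maximality of `(γg, Jg)`: every integral curve through `g` is a
        -- restriction of `γg`
        (∀ (σ : ℝ → M) (J' : Set ℝ), IsIntegralCurveOnOld σ X J' → σ 0 = g →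
          J' ⊆ Jg ∧ Set.EqOn σ γg J') →
        J ⊆ Jg ∧ ∀ t ∈ J, γg t = g * γ t :=
  stmt_12_general I M X hX γ J hγ hγ0
end

section
/- Let M be a Lie monoid whose identity lies in the interior of M. Then the image of the maximal integral curve through e of any left-invariant vector field X is contained in the group of invertible elements of M: for each t in the (full) domain, φ_{−t}(e) is a two-sided inverse of φ_t(e). -/
/-!
Left translates and time translates of `γ` are again integral curves of the left-invariant
field `X`. Integral curves are locally unique at interior points, hence at `1`, and hence, after
a left translation, at every unit. Near `t = 0` the curves `u ↦ γ (u + a)` and `u ↦ γ a * γ u`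
stay in a chart at `1` inside the interior, so they agree and `γ a * γ (-a) = 1` for small `a`.
If `γ (-t)` inverts `γ t` for `|t| < R`, the same comparison, now along curves of units, gives
`γ (u + a) = γ a * γ u` for `|a|, |u| < R`; writing `t = t / 2 + t / 2` then extends the
inversion to `|t| < 2 R`.
-/

open Set Filter
open scoped Manifold Topology

theorem IsPreconnected.eqOn_of_eventuallyEq {Y Z : Type*} [TopologicalSpace Y] {f g : Y → Z}
    {s : Set Y} {y₀ : Y} (hs : IsPreconnected s) (hso : IsOpen s) (hy₀ : y₀ ∈ s)
    (h₀ : f y₀ = g y₀) (hloc : ∀ y ∈ s, f y = g y → f =ᶠ[𝓝 y] g)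
    (hcl : ∀ y ∈ s, y ∈ closure (s ∩ {y | f y = g y}) → f y = g y) : EqOn f g s := by
  have hsub : s ⊆ s ∩ {y | f y = g y} := by
    refine hs.subset_of_closure_inter_subset ?_ ⟨y₀, hy₀, hy₀, h₀⟩ ?_
    · rw [isOpen_iff_mem_nhds]
      rintro y ⟨hy, hfg⟩
      exact inter_mem (hso.mem_nhds hy) (hloc y hy hfg)
    · rintro y ⟨hy, hys⟩
      exact ⟨hys, hcl y hys hy⟩
  exact fun y hy ↦ (hsub hy).2

section Manifold

variable {E : Type*} [NormedAddCommGroup E] [NormedSpace ℝ E]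
  {H : Type*} [TopologicalSpace H] {I : ModelWithCorners ℝ E H}
  {M : Type*} [TopologicalSpace M] [ChartedSpace H M]

-- `M` need not be Hausdorff, but the source of a chart is.
theorem eq_of_mem_closure_of_mem_extChartAt_source {Y : Type*} [TopologicalSpace Y]
    {f g : Y → M} {s : Set Y} {y : Y} (x : M) (hy : y ∈ closure s) (hfg : EqOn f g s)
    (hf : ContinuousAt f y) (hg : ContinuousAt g y)
    (hfx : f y ∈ (extChartAt I x).source) (hgx : g y ∈ (extChartAt I x).source) : f y = g y := by
  have := mem_closure_iff_nhdsWithin_neBot.mp hy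
  have hf' := ((continuousAt_extChartAt' hfx).comp hf).continuousWithinAt (s := s)
  have hg' := ((continuousAt_extChartAt' hgx).comp hg).continuousWithinAt (s := s)
  refine (extChartAt I x).injOn hfx hgx (tendsto_nhds_unique ?_ hg')
  exact hf'.congr' (eventually_nhdsWithin_of_forall fun z hz ↦ by simp [hfg hz])

variable {X : (x : M) → TangentSpace I x} {α β : ℝ → M} {J : Set ℝ} {t₀ : ℝ}

theorem IsMIntegralCurve.eqOn_of_mapsTo_extChartAt_source [IsManifold I 1 M]
    (hX : CMDiff 1 (fun x ↦ (⟨x, X x⟩ : TangentBundle I M)))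
    (hα : IsMIntegralCurve α X) (hβ : IsMIntegralCurve β X) (hJ : IsPreconnected J)
    (hJo : IsOpen J) (ht₀ : t₀ ∈ J) (h₀ : α t₀ = β t₀) (x : M)
    (hαJ : MapsTo α J ((extChartAt I x).source ∩ I.interior M))
    (hβJ : MapsTo β J (extChartAt I x).source) : EqOn α β J := by
  refine hJ.eqOn_of_eventuallyEq hJo ht₀ h₀ (fun t ht hαβ ↦ ?_) fun t ht hcl ↦ ?_
  · exact isMIntegralCurveAt_eventuallyEq_of_contMDiffAt (hαJ ht).2 hX.contMDiffAt
      (hα.isMIntegralCurveAt t) (hβ.isMIntegralCurveAt t) hαβ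
  · exact eq_of_mem_closure_of_mem_extChartAt_source x hcl (fun _ h ↦ h.2)
      hα.continuous.continuousAt hβ.continuous.continuousAt (hαJ ht).1 (hβJ ht)

variable (I) in
def IsLeftInvariant [Monoid M] (X : (g : M) → TangentSpace I g) : Prop :=
  ∀ g h : M, mfderiv I I (fun k ↦ g * k) h (X h) = X (g * h)

variable [Monoid M] [ContMDiffMul I 1 M]

theorem IsMIntegralCurve.const_mul (hX : IsLeftInvariant I X) {γ : ℝ → M}
    (hγ : IsMIntegralCurve γ X) (g : M) : IsMIntegralCurve (fun t ↦ g * γ t) X := by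
  intro t
  have hmul : MDiffAt (fun k ↦ g * k) (γ t) :=
    contMDiff_mul_left.contMDiffAt.mdifferentiableAt one_ne_zero
  refine (hmul.hasMFDerivAt.comp t (hγ t)).congr_mfderiv ?_
  refine ContinuousLinearMap.ext_ring ?_
  change mfderiv I I (fun k ↦ g * k) (γ t) ((1 : ℝ) • X (γ t)) = (1 : ℝ) • X (g * γ t)
  rw [one_smul, one_smul, hX]

theorem IsMIntegralCurve.eventuallyEq_of_isUnit (hX : IsLeftInvariant I X)
    (hXs : CMDiffAt 1 (fun x ↦ (⟨x, X x⟩ : TangentBundle I M)) 1) (h1 : I.IsInteriorPoint (1 : M))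
    (hα : IsMIntegralCurve α X) (hβ : IsMIntegralCurve β X) (h₀ : α t₀ = β t₀)
    (hunit : IsUnit (α t₀)) : α =ᶠ[𝓝 t₀] β := by
  obtain ⟨u, hu⟩ := hunit
  have hα1 : ↑u⁻¹ * α t₀ = 1 := by rw [← hu, Units.inv_mul]
  have htrans : (fun t ↦ ↑u⁻¹ * α t) =ᶠ[𝓝 t₀] fun t ↦ ↑u⁻¹ * β t :=
    isMIntegralCurveAt_eventuallyEq_of_contMDiffAt (hα1 ▸ h1) (hα1 ▸ hXs)
      ((hα.const_mul hX _).isMIntegralCurveAt t₀) ((hβ.const_mul hX _).isMIntegralCurveAt t₀)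
      (by rw [h₀])
  filter_upwards [htrans] with t ht
  simpa using congrArg ((u : M) * ·) ht

theorem IsMIntegralCurve.eqOn_of_mul_eq_one (hX : IsLeftInvariant I X)
    (hXs : CMDiffAt 1 (fun x ↦ (⟨x, X x⟩ : TangentBundle I M)) 1) (h1 : I.IsInteriorPoint (1 : M))
    (hα : IsMIntegralCurve α X) (hβ : IsMIntegralCurve β X) (hJ : IsPreconnected J)
    (hJo : IsOpen J) (ht₀ : t₀ ∈ J) (h₀ : α t₀ = β t₀) {ι : ℝ → M} (hι : Continuous ι)
    (hβι : ∀ t ∈ J, β t * ι t = 1 ∧ ι t * β t = 1) : EqOn α β J := by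
  have : T1Space M := I.t1Space M
  have : ContinuousMul M := continuousMul_of_contMDiffMul I 1
  refine hJ.eqOn_of_eventuallyEq hJo ht₀ h₀ (fun t ht hαβ ↦ ?_) fun t ht hcl ↦ ?_
  · exact hα.eventuallyEq_of_isUnit hX hXs h1 hβ hαβ
      (hαβ ▸ ⟨⟨β t, ι t, (hβι t ht).1, (hβι t ht).2⟩, rfl⟩)
  · -- `{α = β}` is not closed in a non-Hausdorff `M`, but `{α * ι = 1}` is.
    have hclosed : IsClosed {s | α s * ι s = 1} :=
      isClosed_singleton.preimage (hα.continuous.mul hι)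
    have hαι : α t * ι t = 1 := by
      refine hclosed.closure_subset_iff.mpr ?_ hcl
      rintro s ⟨hs, hαβ⟩
      change α s * ι s = 1
      rw [show α s = β s from hαβ]
      exact (hβι s hs).1
    calc α t = α t * ι t * β t := by rw [mul_assoc, (hβι t ht).2, mul_one]
      _ = β t := by rw [hαι, one_mul]

theorem IsMIntegralCurve.exists_pos_mul_neg_eq_one (hX : IsLeftInvariant I X)
    (hXs : CMDiff 1 (fun x ↦ (⟨x, X x⟩ : TangentBundle I M))) (h1 : I.IsInteriorPoint (1 : M))
    {γ : ℝ → M} (hγ : IsMIntegralCurve γ X) (hγ0 : γ 0 = 1) :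
    ∃ r > 0, ∀ t ∈ Ioo (-r) r, γ t * γ (-t) = 1 ∧ γ (-t) * γ t = 1 := by
  have : ContinuousMul M := continuousMul_of_contMDiffMul I 1
  set V := (extChartAt I (1 : M)).source ∩ I.interior M
  have hV : V ∈ 𝓝 1 :=
    inter_mem (extChartAt_source_mem_nhds 1) ((I.isOpen_interior one_ne_zero).mem_nhds h1)
  have hcont : Continuous fun p : ℝ × ℝ ↦ γ p.1 * γ p.2 :=
    hγ.continuous.fst'.mul hγ.continuous.snd'
  obtain ⟨ε, hε, hball⟩ := Metric.mem_nhds_iff.mp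
    ((hcont.continuousAt (x := (0, 0))).preimage_mem_nhds (by simpa [hγ0] using hV))
  have hsmall : ∀ a b, |a| < ε → |b| < ε → γ a * γ b ∈ V := fun a b ha hb ↦
    hball (show (a, b) ∈ Metric.ball (0, 0) ε by simpa [Prod.dist_eq] using ⟨ha, hb⟩)
  have hflow : ∀ a ∈ Ioo (-(ε / 2)) (ε / 2), ∀ u ∈ Ioo (-(ε / 2)) (ε / 2),
      γ (u + a) = γ a * γ u := by
    intro a ha
    refine (hγ.comp_add a).eqOn_of_mapsTo_extChartAt_source hXs (hγ.const_mul hX (γ a))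
      isPreconnected_Ioo isOpen_Ioo (show (0 : ℝ) ∈ _ from ⟨by linarith, by linarith⟩)
      (by simp [hγ0]) 1 (fun u hu ↦ ?_) fun u hu ↦ ?_
    · simpa only [hγ0, mul_one] using hsmall (u + a) 0
        (abs_lt.mpr ⟨by linarith [hu.1, ha.1], by linarith [hu.2, ha.2]⟩) (by simpa using hε)
    · exact (hsmall a u (abs_lt.mpr ⟨by linarith [ha.1], by linarith [ha.2]⟩)
        (abs_lt.mpr ⟨by linarith [hu.1], by linarith [hu.2]⟩)).1
  refine ⟨ε / 2, by positivity, fun t ht ↦ ⟨?_, ?_⟩⟩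
  · simpa [hγ0] using (hflow t ht (-t) ⟨by linarith [ht.2], by linarith [ht.1]⟩).symm
  · simpa [hγ0] using (hflow (-t) ⟨by linarith [ht.2], by linarith [ht.1]⟩ t ht).symm

theorem IsMIntegralCurve.add_eq_mul (hX : IsLeftInvariant I X)
    (hXs : CMDiffAt 1 (fun x ↦ (⟨x, X x⟩ : TangentBundle I M)) 1) (h1 : I.IsInteriorPoint (1 : M))
    {γ : ℝ → M} (hγ : IsMIntegralCurve γ X) (hγ0 : γ 0 = 1) {a R : ℝ}
    (ha : γ a * γ (-a) = 1 ∧ γ (-a) * γ a = 1)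
    (hR : ∀ t ∈ Ioo (-R) R, γ t * γ (-t) = 1 ∧ γ (-t) * γ t = 1) :
    ∀ u ∈ Ioo (-R) R, γ (u + a) = γ a * γ u := by
  have : ContinuousMul M := continuousMul_of_contMDiffMul I 1
  intro u hu
  refine (hγ.comp_add a).eqOn_of_mul_eq_one hX hXs h1 (hγ.const_mul hX (γ a)) isPreconnected_Ioo
    isOpen_Ioo (show (0 : ℝ) ∈ _ from ⟨by linarith [hu.1, hu.2], by linarith [hu.1, hu.2]⟩)
    (by simp [hγ0]) (ι := fun t ↦ γ (-t) * γ (-a))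
    ((hγ.continuous.comp continuous_neg).mul continuous_const) (fun t ht ↦ ⟨?_, ?_⟩) hu
  · rw [mul_assoc, ← mul_assoc (γ t), (hR t ht).1, one_mul, ha.1]
  · rw [mul_assoc, ← mul_assoc (γ (-a)), ha.2, one_mul, (hR t ht).2]

theorem IsMIntegralCurve.mul_neg_eq_one_on_double_Ioo (hX : IsLeftInvariant I X)
    (hXs : CMDiffAt 1 (fun x ↦ (⟨x, X x⟩ : TangentBundle I M)) 1) (h1 : I.IsInteriorPoint (1 : M))
    {γ : ℝ → M} (hγ : IsMIntegralCurve γ X) (hγ0 : γ 0 = 1) {R : ℝ}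
    (hR : ∀ t ∈ Ioo (-R) R, γ t * γ (-t) = 1 ∧ γ (-t) * γ t = 1) :
    ∀ t ∈ Ioo (-(2 * R)) (2 * R), γ t * γ (-t) = 1 ∧ γ (-t) * γ t = 1 := by
  intro t ht
  have hhalf : t / 2 ∈ Ioo (-R) R := ⟨by linarith [ht.1], by linarith [ht.2]⟩
  have hhalf' : -(t / 2) ∈ Ioo (-R) R := ⟨by linarith [ht.2], by linarith [ht.1]⟩
  have hsq : γ t = γ (t / 2) * γ (t / 2) := by
    simpa using hγ.add_eq_mul hX hXs h1 hγ0 (hR _ hhalf) hR _ hhalf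
  have hsq' : γ (-t) = γ (-(t / 2)) * γ (-(t / 2)) := by
    have := hγ.add_eq_mul hX hXs h1 hγ0 (hR _ hhalf') hR _ hhalf'
    rwa [← neg_add, add_halves] at this
  obtain ⟨h₁, h₂⟩ := hR _ hhalf
  constructor
  · rw [hsq, hsq', mul_assoc, ← mul_assoc (γ (t / 2)) (γ (-(t / 2))), h₁, one_mul, h₁]
  · rw [hsq, hsq', mul_assoc, ← mul_assoc (γ (-(t / 2))) (γ (t / 2)), h₂, one_mul, h₂]

end Manifold

theorem stmt_14_general {E H : Type*} [NormedAddCommGroup E] [NormedSpace ℝ E]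
    [TopologicalSpace H] (I : ModelWithCorners ℝ E H)
    (M : Type*) [TopologicalSpace M] [ChartedSpace H M] [Monoid M]
    [ContMDiffMul I (⊤ : ℕ∞) M]
    (h1 : (1 : M) ∈ I.interior M)
    (X : (g : M) → TangentSpace I g)
    (hX : ∀ g h : M, mfderiv I I (fun k => g * k) h (X h) = X (g * h))
    (hXsmooth : ContMDiff I I.tangent (⊤ : ℕ∞) (fun g => (⟨g, X g⟩ : TangentBundle I M)))
    (γ : ℝ → M) (hγ : IsMIntegralCurveOn γ X Set.univ) (hγ0 : γ 0 = 1) :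
    ∀ t : ℝ, γ (-t) * γ t = 1 ∧ γ t * γ (-t) = 1 ∧ IsUnit (γ t) := by
  have hXs : CMDiff 1 (fun g ↦ (⟨g, X g⟩ : TangentBundle I M)) := hXsmooth.of_le (by simp)
  have hγ' : IsMIntegralCurve γ X := isMIntegralCurve_iff_isMIntegralCurveOn.mpr hγ
  obtain ⟨r, hr, hbase⟩ := hγ'.exists_pos_mul_neg_eq_one hX hXs h1 hγ0
  have hgrow : ∀ n : ℕ, ∀ t ∈ Ioo (-(2 ^ n * r)) (2 ^ n * r),
      γ t * γ (-t) = 1 ∧ γ (-t) * γ t = 1 := by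
    intro n
    induction n with
    | zero => simpa using hbase
    | succ n ih =>
      rw [pow_succ, mul_comm _ (2 : ℝ), mul_assoc]
      exact hγ'.mul_neg_eq_one_on_double_Ioo hX hXs.contMDiffAt h1 hγ0 ih
  intro t
  obtain ⟨n, hn⟩ := pow_unbounded_of_one_lt (|t| / r) one_lt_two
  obtain ⟨h₁, h₂⟩ := hgrow n t (abs_lt.mp ((div_lt_iff₀ hr).mp hn))
  exact ⟨h₂, h₁, ⟨⟨γ t, γ (-t), h₁, h₂⟩, rfl⟩⟩

/-- Let `M` be a Lie monoid whose identity lies in the interior of `M`, and let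
`X` be a left-invariant vector field with complete integral curve `γ` through
the identity.  Then the image of `γ` consists of invertible elements: for every
`t`, `γ (-t)` is a two-sided inverse of `γ t`. -/
theorem stmt_14 {E H : Type*} [NormedAddCommGroup E] [NormedSpace ℝ E]
    [TopologicalSpace H] (I : ModelWithCorners ℝ E H)
    (M : Type*) [TopologicalSpace M] [ChartedSpace H M] [Monoid M]
    [IsManifold I (⊤ : ℕ∞) M] [ContMDiffMul I (⊤ : ℕ∞) M]
    (h1 : (1 : M) ∈ I.interior M)
    (X : (g : M) → TangentSpace I g)
    (hX : ∀ g h : M, mfderiv I I (fun k => g * k) h (X h) = X (g * h))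
    (hXsmooth : ContMDiff I I.tangent (⊤ : ℕ∞) (fun g => (⟨g, X g⟩ : TangentBundle I M)))
    (γ : ℝ → M) (hγ : IsMIntegralCurveOn γ X Set.univ) (hγ0 : γ 0 = 1) :
    ∀ t : ℝ, γ (-t) * γ t = 1 ∧ γ t * γ (-t) = 1 ∧ IsUnit (γ t) :=
  stmt_14_general I M h1 X hX hXsmooth γ hγ hγ0
end
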